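/- arXiv:1008.2804 — 4 statements merged into one kernel-verified Lean document; each statement's English description precedes it below -/
import Mathlib

section
/- Let V ⊆ ℝ^N be a subspace with dim(V) > k, and let k < r. Then the set of matrices A ∈ ℝ^{r×N} such that dim(A(V)) ≤ k has Lebesgue measure zero in ℝ^{r×N}. -/
/-!
Fix independent vectors `w 0, …, w k` in `V`. The minor `det ((A w j) i)_{i, j ≤ k}` on the first
`k + 1` rows is a polynomial in the entries of `A`. It vanishes whenever `dim A(V) ≤ k`, since then
the vectors `A w j` are dependent, and it is not the zero polynomial: at the matrix whose first
`k + 1` rows are the `w i` it is the Gram determinant of the `w j`. Finally, the zero set of a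
nonzero real polynomial is Lebesgue-null, by induction on the number of variables and Fubini: for
almost every value of the other variables the leading coefficient in the last one does not vanish,
leaving finitely many roots.
-/

open MeasureTheory

namespace MvPolynomial

theorem measurableSet_setOf_eval_eq_zero {σ : Type*} [Countable σ] (p : MvPolynomial σ ℝ) :
    MeasurableSet {x : σ → ℝ | eval x p = 0} :=
  (continuous_eval p).measurable (measurableSet_singleton 0)

theorem volume_zeroSet_eq_zero_option {σ : Type*} [Fintype σ]
    (ih : ∀ q : MvPolynomial σ ℝ, q ≠ 0 → volume {x : σ → ℝ | eval x q = 0} = 0)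
    {p : MvPolynomial (Option σ) ℝ} (hp : p ≠ 0) :
    volume {x : Option σ → ℝ | eval x p = 0} = 0 := by
  set q := optionEquivLeft ℝ σ p
  have hq : q ≠ 0 := AddEquivClass.map_ne_zero_iff.mpr hp
  let e := MeasurableEquiv.piOptionEquivProd fun _ : Option σ => ℝ
  have he (y : σ → ℝ) (t : ℝ) : e.symm (y, t) = fun i => Option.elim i t y := by
    ext i; cases i <;> rfl
  rw [volume_pi, ← Measure.pi_map_piOptionEquivProd, e.symm.map_apply,
    Measure.measure_prod_null (e.symm.measurable (measurableSet_setOf_eval_eq_zero p))]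
  have hlc : ∀ᵐ y : σ → ℝ, eval y q.leadingCoeff ≠ 0 := by
    rw [ae_iff]
    simpa using ih _ (Polynomial.leadingCoeff_ne_zero.mpr hq)
  filter_upwards [hlc] with y hy
  have hqy : q.map (eval y) ≠ 0 := by
    rw [← Polynomial.leadingCoeff_ne_zero,
      Polynomial.leadingCoeff_map_of_leadingCoeff_ne_zero _ hy]
    exact hy
  have hslice : Prod.mk y ⁻¹' (e.symm ⁻¹' {x | eval x p = 0}) =
      {t | (q.map (eval y)).IsRoot t} := by
    ext t
    simp [he, optionEquivLeft_elim_eval, q]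
  rw [Pi.zero_apply, hslice]
  exact (Polynomial.finite_setOfPred_isRoot hqy).measure_zero volume

theorem volume_zeroSet_eq_zero_of_equiv {α β : Type*} [Fintype α] [Fintype β] (e : α ≃ β)
    (h : ∀ q : MvPolynomial α ℝ, q ≠ 0 → volume {x : α → ℝ | eval x q = 0} = 0)
    {p : MvPolynomial β ℝ} (hp : p ≠ 0) :
    volume {x : β → ℝ | eval x p = 0} = 0 := by
  have hF := volume_preserving_arrowCongr' e (MeasurableEquiv.refl ℝ) (.id volume)
  have hpre : MeasurableEquiv.arrowCongr' e (MeasurableEquiv.refl ℝ) ⁻¹' {x | eval x p = 0} =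
      {x | eval x (rename e.symm p) = 0} := by
    ext x
    simp only [Set.mem_preimage, Set.mem_ofPred_eq, eval_rename]
    rfl
  rw [← hF.measure_preimage (measurableSet_setOf_eval_eq_zero p).nullMeasurableSet, hpre]
  exact h _ ((rename_injective _ e.symm.injective).ne_iff' (map_zero _) |>.mpr hp)

theorem volume_zeroSet_eq_zero {σ : Type*} [Fintype σ] {p : MvPolynomial σ ℝ} (hp : p ≠ 0) :
    volume {x : σ → ℝ | eval x p = 0} = 0 := by
  have h_empty (q : MvPolynomial PEmpty ℝ) (hq : q ≠ 0) :
      volume {x : PEmpty → ℝ | eval x q = 0} = 0 := by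
    convert measure_empty (μ := volume)
    refine Set.eq_empty_of_forall_notMem fun x hx => hq (funext fun y => ?_)
    rw [Subsingleton.elim y x, hx, map_zero]
  exact Fintype.induction_empty_option
    (P := fun σ _ => ∀ p : MvPolynomial σ ℝ, p ≠ 0 → volume {x : σ → ℝ | eval x p = 0} = 0)
    (fun α β _ e ih _ => letI := Fintype.ofEquiv β e.symm; volume_zeroSet_eq_zero_of_equiv e ih)
    h_empty (fun α _ ih _ => volume_zeroSet_eq_zero_option ih) σ p hp

end MvPolynomial

theorem MeasureTheory.measurePreserving_uncurry {ι κ X : Type*} [Fintype ι] [Fintype κ]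
    [MeasurableSpace X] (μ : Measure X) [SigmaFinite μ] :
    MeasurePreserving (Function.uncurry : (ι → κ → X) → ι × κ → X)
      (Measure.pi fun _ => Measure.pi fun _ => μ) (Measure.pi fun _ => μ) := by
  refine ⟨(MeasurableEquiv.curry ι κ X).symm.measurable, (Measure.pi_eq fun s hs => ?_).symm⟩
  rw [← MeasurableEquiv.coe_curry_symm, MeasurableEquiv.map_apply]
  have hpre : (MeasurableEquiv.curry ι κ X).symm ⁻¹' Set.univ.pi s =
      Set.univ.pi fun i => Set.univ.pi fun j => s (i, j) := by
    ext A
    simp [Set.mem_pi, Prod.forall]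
  simp_rw [hpre, Measure.pi_pi, Fintype.prod_prod_type]

namespace Matrix

variable {ρ κ ι R : Type*} [Fintype κ] [Fintype ι] [DecidableEq ι]

theorem det_dotProduct_ne_zero_of_linearIndependent [Field R] [LinearOrder R]
    [IsStrictOrderedRing R] {v : ι → κ → R} (hv : LinearIndependent R v) :
    (of fun i j => v i ⬝ᵥ v j).det ≠ 0 := by
  rw [Ne, ← exists_mulVec_eq_zero_iff]
  rintro ⟨c, hc, hGc⟩
  let W : Matrix κ ι R := (of v)ᵀ
  have hWW : (Wᵀ * W) *ᵥ c = 0 := by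
    convert hGc using 2
    ext i j
    simp [W, mul_apply, dotProduct]
  have hWc : W *ᵥ c = W *ᵥ 0 := by
    rw [mulVec_zero]
    simpa using congr(c ∈ $(ker_mulVecLin_transpose_mul_self W)).mp hWW
  exact hc (mulVec_injective_iff.mpr hv hWc)

theorem linearIndependent_of_det_comp_ne_zero [CommRing R] [IsDomain R] {v : ι → ρ → R}
    {e : ι → ρ} (h : (of fun i j => v j (e i)).det ≠ 0) : LinearIndependent R v :=
  (linearIndependent_cols_of_det_ne_zero h).of_comp (LinearMap.funLeft R R e)

noncomputable def mvPolynomialMinor [CommRing R] (e : ι → ρ) (v : ι → κ → R) :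
    MvPolynomial (ρ × κ) R :=
  (of fun i j => (mvPolynomialX ρ κ R *ᵥ (MvPolynomial.C ∘ v j)) (e i)).det

theorem eval_mvPolynomialMinor [CommRing R] (e : ι → ρ) (v : ι → κ → R) (A : Matrix ρ κ R) :
    MvPolynomial.eval (fun p => A p.1 p.2) (mvPolynomialMinor e v) =
      (of fun i j => (A *ᵥ v j) (e i)).det := by
  rw [mvPolynomialMinor, RingHom.map_det]
  congr 1
  ext i j
  simp [mulVec, dotProduct]

theorem mvPolynomialMinor_ne_zero [Field R] [LinearOrder R] [IsStrictOrderedRing R]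
    {e : ι → ρ} (he : e.Injective) {v : ι → κ → R} (hv : LinearIndependent R v) :
    mvPolynomialMinor e v ≠ 0 := by
  intro h
  have hwit := eval_mvPolynomialMinor e v (of (Function.extend e v 0))
  have hgram : (of fun i j => (of (Function.extend e v 0) *ᵥ v j) (e i)) =
      of fun i j => v i ⬝ᵥ v j := by
    ext i j
    simp [mulVec, he.extend_apply]
  rw [h, map_zero, hgram] at hwit
  exact det_dotProduct_ne_zero_of_linearIndependent hv hwit.symm

end Matrix

theorem Submodule.card_le_finrank_map_of_linearIndependent {K M N ι : Type*} [Field K]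
    [AddCommGroup M] [Module K M] [AddCommGroup N] [Module K N] [Module.Finite K N] [Fintype ι]
    (V : Submodule K M) (f : M →ₗ[K] N) {v : ι → V} (hv : LinearIndependent K fun i => f (v i)) :
    Fintype.card ι ≤ Module.finrank K (V.map f) := by
  rw [← finrank_span_eq_card hv]
  exact Submodule.finrank_mono (Submodule.span_le.mpr (Set.range_subset_iff.mpr fun i =>
    Submodule.mem_map_of_mem (v i).2))

/-- If `V ⊆ ℝ^N` is a subspace with `dim V > k` and `k < r`, then the set of matrices
`A ∈ ℝ^{r×N}` with `dim A(V) ≤ k` has Lebesgue measure zero (matrices identified with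
`ℝ^{rN}` carrying Lebesgue measure). -/
theorem measure_zero_dim_image_le {N r k : ℕ} (hkr : k < r)
    (V : Submodule ℝ (Fin N → ℝ)) (hV : k < Module.finrank ℝ V) :
    MeasureTheory.volume {A : Fin r → Fin N → ℝ |
      Module.finrank ℝ (V.map (Matrix.of A).mulVecLin) ≤ k} = 0 := by
  obtain ⟨w, hw⟩ : ∃ w : Fin (k + 1) → V, LinearIndependent ℝ w :=
    exists_linearIndependent_of_le_rank <| by
      rw [← Module.finrank_eq_rank]; exact_mod_cast hV
  have hv : LinearIndependent ℝ fun j => (w j : Fin N → ℝ) := hw.map' V.subtype V.ker_subtype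
  set P := Matrix.mvPolynomialMinor (Fin.castLE hkr) fun j => (w j : Fin N → ℝ)
  refine measure_mono_null (t := Function.uncurry ⁻¹' {x | MvPolynomial.eval x P = 0})
    (fun A hA => ?_) ?_
  · by_contra hP
    have hAw : LinearIndependent ℝ fun j => (Matrix.of A).mulVec (w j : Fin N → ℝ) :=
      Matrix.linearIndependent_of_det_comp_ne_zero (e := Fin.castLE hkr)
        (by rw [← Matrix.eval_mvPolynomialMinor]; exact hP)
    have hcard := V.card_le_finrank_map_of_linearIndependent (Matrix.of A).mulVecLin hAw
    simp only [Fintype.card_fin, Set.mem_ofPred_eq] at hcard hA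
    omega
  · exact ((measurePreserving_uncurry volume).measure_preimage
      (MvPolynomial.measurableSet_setOf_eval_eq_zero P).nullMeasurableSet).trans
      (MvPolynomial.volume_zeroSet_eq_zero
        (Matrix.mvPolynomialMinor_ne_zero (Fin.castLE_injective _) hv))
end

section
/- Let A, B be m×m real symmetric matrices and let λ_1(M) ≥ ... ≥ λ_m(M) denote the eigenvalues of a symmetric matrix M in decreasing order. Then for any choice of indices 1 ≤ i_1 < i_2 < ... < i_k ≤ m, one has Σ_{j=1}^k (λ_{i_j}(A) − λ_{i_j}(B)) ≤ Σ_{j=1}^k λ_j(A − B). -/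
/-!
Set `C = A - B` and `c = λ_k(C)`, and let `P = (C - c)⁺` be the positive part, so that
`tr P = Σ_{j ≤ k} (λ_j(C) - c)`. The matrix `D = B + c + P` dominates both `A` and `B + c` in the
Loewner order, hence by Weyl monotonicity `λ_i(A) ≤ λ_i(D)` and `λ_i(B) + c ≤ λ_i(D)` for all `i`.
The differences `λ_i(D) - λ_i(B) - c` are therefore nonnegative, so summing them over the chosen
indices gives at most their total `tr D - tr B - m c = tr P`, and the claim follows.
-/

/-- The eigenvalues of a real symmetric matrix, listed in decreasing order
(with multiplicity). -/
noncomputable def eigDesc {m : ℕ} {A : Matrix (Fin m) (Fin m) ℝ}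
    (hA : A.IsHermitian) : Fin m → ℝ :=
  fun i => hA.eigenvalues (Tuple.sort (fun j => -hA.eigenvalues j) i)

open Finset Matrix Module Submodule
open scoped RealInnerProductSpace MatrixOrder

theorem Module.Basis.exists_ne_zero_mem_span_Iic_mem_span_Ici {K V : Type*} [Field K]
    [AddCommGroup V] [Module K V] {n : ℕ} (b b' : Basis (Fin n) K V) (i : Fin n) :
    ∃ x ≠ 0, x ∈ span K (b '' Set.Iic i) ∧ x ∈ span K (b' '' Set.Ici i) := by
  have : FiniteDimensional K V := b.finiteDimensional_of_finite
  have hdim (c : Basis (Fin n) K V) (s : Finset (Fin n)) :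
      finrank K (span K (c '' s)) = s.card := by
    rw [Set.image_eq_range, ← Fintype.card_coe]
    exact finrank_span_eq_card (c.linearIndependent.comp _ Subtype.val_injective)
  have hlt : finrank K V <
      finrank K (span K (b '' Set.Iic i)) + finrank K (span K (b' '' Set.Ici i)) := by
    rw [← Finset.coe_Iic, ← Finset.coe_Ici, hdim, hdim, finrank_eq_card_basis b, Fin.card_Iic,
      Fin.card_Ici, Fintype.card_fin]
    omega
  contrapose! hlt
  exact finrank_add_finrank_le_of_disjoint
    (disjoint_def.mpr fun x hx hx' => by_contra fun h => hlt x h hx hx')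

namespace OrthonormalBasis

variable {ι E : Type*} [Fintype ι] [NormedAddCommGroup E] [InnerProductSpace ℝ E]
  (b : OrthonormalBasis ι ℝ E)

theorem inner_eq_zero_of_mem_span {s : Set ι} {x : E} (hx : x ∈ span ℝ (b '' s)) {j : ι}
    (hj : j ∉ s) : ⟪b j, x⟫ = 0 := by
  have hle : span ℝ (b '' s) ≤ (ℝ ∙ b j)ᗮ := span_le.mpr <| by
    rintro _ ⟨i, hi, rfl⟩
    exact mem_orthogonal_singleton_iff_inner_right.mpr
      (b.orthonormal.2 (ne_of_mem_of_not_mem hi hj).symm)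
  exact mem_orthogonal_singleton_iff_inner_right.mp (hle hx)

variable {T : E →ₗ[ℝ] E} {μ : ι → ℝ}

theorem inner_map_self_eq_sum (hT : ∀ i, T (b i) = μ i • b i) (x : E) :
    ⟪T x, x⟫ = ∑ i, μ i * ⟪b i, x⟫ ^ 2 := by
  have hTx : T x = ∑ i, (μ i * ⟪b i, x⟫) • b i := by
    conv_lhs => rw [← b.sum_repr' x]
    simp only [map_sum, map_smul, hT, smul_smul, mul_comm]
  rw [hTx, sum_inner]
  refine sum_congr rfl fun i _ => ?_
  rw [real_inner_smul_left, real_inner_comm, sq, mul_assoc]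

theorem mul_norm_sq_le_inner_map_self (hT : ∀ i, T (b i) = μ i • b i) {s : Set ι} {t : ℝ}
    (hμ : ∀ i ∈ s, t ≤ μ i) {x : E} (hx : x ∈ span ℝ (b '' s)) :
    t * ‖x‖ ^ 2 ≤ ⟪T x, x⟫ := by
  rw [b.inner_map_self_eq_sum hT, ← b.sum_sq_inner_right, mul_sum]
  refine sum_le_sum fun i _ => ?_
  by_cases hi : i ∈ s
  · exact mul_le_mul_of_nonneg_right (hμ i hi) (sq_nonneg _)
  · simp [b.inner_eq_zero_of_mem_span hx hi]

theorem inner_map_self_le_mul_norm_sq (hT : ∀ i, T (b i) = μ i • b i) {s : Set ι} {t : ℝ}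
    (hμ : ∀ i ∈ s, μ i ≤ t) {x : E} (hx : x ∈ span ℝ (b '' s)) :
    ⟪T x, x⟫ ≤ t * ‖x‖ ^ 2 := by
  have hnegT (i : ι) : (-T) (b i) = (-μ i) • b i := by simp [hT]
  simpa [inner_neg_left] using
    b.mul_norm_sq_le_inner_map_self hnegT (t := -t) (fun i hi => neg_le_neg (hμ i hi)) hx

end OrthonormalBasis

/-- Weyl monotonicity, in Courant–Fischer form: the top `i + 1` eigenvectors of `S` and the
bottom `n - i` eigenvectors of `T` span subspaces that meet in a nonzero vector. -/
theorem eigenvalue_add_le_of_inner_map_self_add_le {E : Type*} [NormedAddCommGroup E]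
    [InnerProductSpace ℝ E] {n : ℕ} {S T : E →ₗ[ℝ] E} {bS bT : OrthonormalBasis (Fin n) ℝ E}
    {μ ν : Fin n → ℝ} (hμ : Antitone μ) (hν : Antitone ν) (hS : ∀ i, S (bS i) = μ i • bS i)
    (hT : ∀ i, T (bT i) = ν i • bT i) {c : ℝ} (hST : ∀ x, ⟪S x, x⟫ + c * ‖x‖ ^ 2 ≤ ⟪T x, x⟫)
    (i : Fin n) : μ i + c ≤ ν i := by
  obtain ⟨x, hx0, hxS, hxT⟩ := bS.toBasis.exists_ne_zero_mem_span_Iic_mem_span_Ici bT.toBasis i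
  rw [OrthonormalBasis.coe_toBasis] at hxS hxT
  have hS_ge := bS.mul_norm_sq_le_inner_map_self hS (fun j hj => hμ (Set.mem_Iic.mp hj)) hxS
  have hT_le := bT.inner_map_self_le_mul_norm_sq hT (fun j hj => hν (Set.mem_Ici.mp hj)) hxT
  have hx : 0 < ‖x‖ ^ 2 := by positivity
  exact le_of_mul_le_mul_right (by linarith [hST x]) hx

theorem Matrix.IsHermitian.trace_cfc {𝕜 n : Type*} [RCLike 𝕜] [Fintype n] [DecidableEq n]
    {A : Matrix n n 𝕜} (hA : A.IsHermitian) (f : ℝ → ℝ) :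
    (cfc f A).trace = ∑ i, (f (hA.eigenvalues i) : 𝕜) := by
  rw [hA.cfc_eq, IsHermitian.cfc, Unitary.conjStarAlgAut_apply, trace_mul_cycle,
    Unitary.coe_star_mul_self, one_mul, trace_diagonal]
  rfl

namespace Matrix.IsHermitian

variable {m : ℕ} {A B C D : Matrix (Fin m) (Fin m) ℝ}

lemma eigDesc_antitone (hA : A.IsHermitian) : Antitone (eigDesc hA) := fun _ _ hij =>
  neg_le_neg_iff.mp (Tuple.monotone_sort (fun j => -hA.eigenvalues j) hij)

lemma sum_comp_eigDesc (hA : A.IsHermitian) (f : ℝ → ℝ) :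
    ∑ i, f (eigDesc hA i) = ∑ i, f (hA.eigenvalues i) :=
  Equiv.sum_comp (Tuple.sort fun j => -hA.eigenvalues j) (fun i => f (hA.eigenvalues i))

lemma sum_eigDesc (hA : A.IsHermitian) : ∑ i, eigDesc hA i = A.trace := by
  rw [hA.trace_eq_sum_eigenvalues]
  exact hA.sum_comp_eigDesc id

noncomputable def sortedEigenbasis (hA : A.IsHermitian) :
    OrthonormalBasis (Fin m) ℝ (EuclideanSpace ℝ (Fin m)) :=
  hA.eigenvectorBasis.reindex (Tuple.sort fun j => -hA.eigenvalues j).symm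

lemma toEuclideanLin_sortedEigenbasis (hA : A.IsHermitian) (i : Fin m) :
    toEuclideanLin A (hA.sortedEigenbasis i) = eigDesc hA i • hA.sortedEigenbasis i := by
  simp only [sortedEigenbasis, OrthonormalBasis.reindex_apply, Equiv.symm_symm]
  ext j
  simpa [toLpLin_apply, eigDesc] using congrFun (hA.mulVec_eigenvectorBasis _) j

theorem eigDesc_add_le (hB : B.IsHermitian) (hD : D.IsHermitian) {c : ℝ} (h : B + c • 1 ≤ D)
    (i : Fin m) : eigDesc hB i + c ≤ eigDesc hD i := by
  refine eigenvalue_add_le_of_inner_map_self_add_le hB.eigDesc_antitone hD.eigDesc_antitone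
    hB.toEuclideanLin_sortedEigenbasis hD.toEuclideanLin_sortedEigenbasis (fun x => ?_) i
  have := (isPositive_toEuclideanLin_iff.mpr (le_iff.mp h)).inner_nonneg_left x
  simp only [map_sub, map_add, map_smul, toLpLin_one, LinearMap.sub_apply, LinearMap.add_apply,
    LinearMap.smul_apply, LinearMap.id_coe, id_eq, inner_sub_left, inner_add_left,
    real_inner_smul_left, real_inner_self_eq_norm_sq] at this
  linarith

theorem eigDesc_mono (hA : A.IsHermitian) (hD : D.IsHermitian) (h : A ≤ D) (i : Fin m) :
    eigDesc hA i ≤ eigDesc hD i := by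
  simpa using hA.eigDesc_add_le hD (c := 0) (by simpa using h) i

theorem exists_nonneg_ge_sub_smul_one (hC : C.IsHermitian) (c : ℝ) :
    ∃ P : Matrix (Fin m) (Fin m) ℝ, 0 ≤ P ∧ C - c • 1 ≤ P ∧
      P.trace = ∑ i, max (eigDesc hC i - c) 0 := by
  have hshift : C - c • 1 = cfc (fun x => x - c) C := by
    rw [cfc_sub .., cfc_id' .., cfc_const .., Algebra.algebraMap_eq_smul_one]
  refine ⟨cfc (fun x => max (x - c) 0) C, cfc_nonneg fun x _ => le_max_right _ _, ?_, ?_⟩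
  · rw [hshift]
    exact (cfc_le_iff ..).mpr fun x _ => le_max_left _ _
  · rw [hC.trace_cfc, hC.sum_comp_eigDesc fun x => max (x - c) 0]
    rfl

end Matrix.IsHermitian

theorem sum_comp_sub_le_card_mul_add_sum {κ n : Type*} [Fintype κ] [Fintype n]
    {a b d : n → ℝ} {c : ℝ} (had : a ≤ d) (hbd : ∀ i, b i + c ≤ d i) {ι : κ → n}
    (hι : Function.Injective ι) :
    ∑ j, (a (ι j) - b (ι j)) ≤ Fintype.card κ * c + ∑ i, (d i - b i - c) := by
  have hsub : ∑ j, (d (ι j) - b (ι j) - c) ≤ ∑ i, (d i - b i - c) :=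
    (sum_map univ ⟨ι, hι⟩ fun i => d i - b i - c).symm.trans_le
      (sum_le_univ_sum_of_nonneg fun i => by linarith [hbd i])
  calc ∑ j, (a (ι j) - b (ι j))
      ≤ ∑ j, (c + (d (ι j) - b (ι j) - c)) := sum_le_sum fun j _ => by linarith [had (ι j)]
    _ ≤ Fintype.card κ * c + ∑ i, (d i - b i - c) := by
      rw [sum_add_distrib, sum_const, card_univ, nsmul_eq_mul]
      linarith

theorem Antitone.sum_max_sub_apply_castLE_last {m k : ℕ} {f : Fin m → ℝ} (hf : Antitone f)
    (h : k + 1 ≤ m) :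
    ∑ i, max (f i - f (Fin.castLE h (Fin.last k))) 0 =
      ∑ j : Fin (k + 1), (f (Fin.castLE h j) - f (Fin.castLE h (Fin.last k))) := by
  set c := f (Fin.castLE h (Fin.last k))
  have hhead (j : Fin (k + 1)) : max (f (Fin.castLE h j) - c) 0 = f (Fin.castLE h j) - c :=
    max_eq_left (sub_nonneg.mpr (hf (Fin.le_def.mpr (by simpa using Fin.is_le j))))
  have htail (i : Fin m) (hi : i ∉ univ.map (Fin.castLEEmb h)) : max (f i - c) 0 = 0 := by
    refine max_eq_right (sub_nonpos.mpr (hf (Fin.le_def.mpr ?_)))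
    by_contra! hik
    exact hi (mem_map_of_mem _ (mem_univ (⟨i, Nat.lt_succ_of_lt (by simpa using hik)⟩ :
      Fin (k + 1))))
  rw [← sum_subset (subset_univ _) fun i _ hi => htail i hi, sum_map]
  exact sum_congr rfl fun j _ => hhead j

/-- Lidskii-type inequality (Bhatia, Theorem III.4.1): for real symmetric `A, B` and any
strictly increasing choice of indices `i_1 < ... < i_k`,
`Σ_j (λ_{i_j}(A) − λ_{i_j}(B)) ≤ Σ_{j=1}^k λ_j(A − B)`. -/
theorem lidskii_inequality {m k : ℕ} (hkm : k ≤ m)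
    (A B : Matrix (Fin m) (Fin m) ℝ)
    (hA : A.IsHermitian) (hB : B.IsHermitian) (hAB : (A - B).IsHermitian)
    (ι : Fin k → Fin m) (hι : StrictMono ι) :
    ∑ j : Fin k, (eigDesc hA (ι j) - eigDesc hB (ι j)) ≤
      ∑ j : Fin k, eigDesc hAB (Fin.castLE hkm j) := by
  cases k with
  | zero => simp
  | succ k =>
    set c := eigDesc hAB (Fin.castLE hkm (Fin.last k))
    obtain ⟨P, hP, hCP, hPtr⟩ := hAB.exists_nonneg_ge_sub_smul_one c
    have hD : (B + c • 1 + P).IsHermitian :=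
      (hB.add (isHermitian_one.smul (IsSelfAdjoint.all c))).add (nonneg_iff_posSemidef.mp hP).isHermitian
    have hAD : A ≤ B + c • 1 + P := by
      simpa using add_le_add_right hCP (B + c • 1)
    have htr : ∑ i, (eigDesc hD i - eigDesc hB i - c) = P.trace := by
      simp only [sum_sub_distrib, hD.sum_eigDesc, hB.sum_eigDesc, trace_add, trace_smul,
        trace_one, sum_const, card_univ, Fintype.card_fin, nsmul_eq_mul, smul_eq_mul]
      ring
    calc ∑ j, (eigDesc hA (ι j) - eigDesc hB (ι j))
        ≤ (k + 1 : ℕ) * c + ∑ i, (eigDesc hD i - eigDesc hB i - c) := by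
          simpa using sum_comp_sub_le_card_mul_add_sum (hA.eigDesc_mono hD hAD)
            (hB.eigDesc_add_le hD (le_add_of_nonneg_right hP)) hι.injective
      _ = ∑ j, eigDesc hAB (Fin.castLE hkm j) := by
          rw [htr, hPtr, hAB.eigDesc_antitone.sum_max_sub_apply_castLE_last, sum_sub_distrib]
          simp only [sum_const, card_univ, Fintype.card_fin, nsmul_eq_mul]
          ring
end

section
/- Eckart–Young (error form): for M ∈ ℝ^{N×m} with rank d and 0 ≤ k ≤ d, the minimum over all subspaces V ⊆ ℝ^N with dim V ≤ k of E(M,V) = Σ_{i=1}^m dist²(f_i, V) equals Σ_{j=k+1}^d λ_j(M^T M), where f_1,...,f_m are the columns of M and λ_1 ≥ ... ≥ λ_d > 0 are the positive eigenvalues of M^T M. -/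
/-!
Write `T = M : ℝ^m → ℝ^N` and let `v_j` be an orthonormal eigenbasis of `MᵀM` with eigenvalues
`λ_1 ≥ λ_2 ≥ ⋯`, so that the vectors `T v_j` are pairwise orthogonal with `‖T v_j‖² = λ_j`.
For a subspace `V` with orthogonal projection `P`, the sum `Σ_i ‖P f_i‖² = tr((PT)*(PT))` may be
computed in the basis `v` instead of the standard one, hence `E(M,V) = Σ_j λ_j - Σ_j ‖P T v_j‖²`.
Normalising, `‖P T v_j‖² = λ_j t_j` with `t_j = ‖P u_j‖² ∈ [0,1]` for the orthonormal vectors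
`u_j = T v_j / √λ_j`, and Bessel's inequality in an orthonormal basis of `V` gives
`Σ_j t_j ≤ dim V ≤ k`; for decreasing `λ` this forces `Σ_j λ_j t_j ≤ λ_1 + ⋯ + λ_k`.
The span of `T v_1, …, T v_k` attains this bound, and `λ_j = 0` for `j > rank M`.
-/

open Matrix

/-- View a vector of `ℝ^N` as an element of Euclidean space. -/
def toE {N : ℕ} (x : Fin N → ℝ) : EuclideanSpace ℝ (Fin N) := WithLp.toLp 2 x

open Finset Module

open scoped RealInnerProductSpace

theorem sum_mul_le_sum_of_threshold {ι : Type*} [Fintype ι] (s : Finset ι) {f t : ι → ℝ} {c : ℝ}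
    (hc : 0 ≤ c) (hfs : ∀ j ∈ s, c ≤ f j) (hfsc : ∀ j ∉ s, f j ≤ c) (ht0 : ∀ j, 0 ≤ t j)
    (ht1 : ∀ j, t j ≤ 1) (ht : ∑ j, t j ≤ #s) :
    ∑ j, f j * t j ≤ ∑ j ∈ s, f j := by
  classical
  calc ∑ j, f j * t j
      ≤ ∑ j, ((if j ∈ s then f j else 0) + c * (t j - if j ∈ s then 1 else 0)) := by
        refine sum_le_sum fun j _ => ?_
        by_cases hj : j ∈ s
        · simp only [if_pos hj]
          nlinarith [hfs j hj, ht1 j]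
        · simp only [if_neg hj]
          nlinarith [hfsc j hj, ht0 j]
    _ = ∑ j ∈ s, f j + c * (∑ j, t j - #s) := by
        simp [sum_add_distrib, mul_sub, mul_sum, sum_sub_distrib, sum_ite_mem, mul_comm]
    _ ≤ ∑ j ∈ s, f j := by linarith [mul_nonpos_of_nonneg_of_nonpos hc (sub_nonpos.2 ht)]

theorem Antitone.sum_mul_le_sum_lt {m k : ℕ} {f t : Fin m → ℝ} (hf : Antitone f)
    (hf0 : ∀ j, 0 ≤ f j) (ht0 : ∀ j, 0 ≤ t j) (ht1 : ∀ j, t j ≤ 1) (ht : ∑ j, t j ≤ k) :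
    ∑ j, f j * t j ≤ ∑ j : Fin m with j.val < k, f j := by
  rcases lt_or_ge k m with hkm | hmk
  · refine sum_mul_le_sum_of_threshold _ (hf0 ⟨k, hkm⟩) (fun j hj => hf ?_) (fun j hj => hf ?_)
      ht0 ht1 ?_
    · simp only [mem_filter, mem_univ, true_and] at hj
      exact Fin.mk_le_of_le_val hj.le
    · simp only [mem_filter, mem_univ, true_and, not_lt] at hj
      exact Fin.le_def.2 hj
    · rwa [Fin.card_filter_val_lt, min_eq_right hkm.le]
  · rw [filter_true_of_mem fun j _ => j.isLt.trans_le hmk]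
    exact sum_le_sum fun j _ => mul_le_of_le_one_right (hf0 j) (ht1 j)

theorem Antitone.eq_zero_of_card_ne_zero_le {m : ℕ} {f : Fin m → ℝ} (hf : Antitone f)
    (hf0 : ∀ j, 0 ≤ f j) {j : Fin m} (hj : #{i | f i ≠ 0} ≤ (j : ℕ)) : f j = 0 := by
  by_contra hne
  have hpos : 0 < f j := (hf0 j).lt_of_ne' hne
  have hsub : Iic j ⊆ ({i | f i ≠ 0} : Finset (Fin m)) := fun i hi =>
    mem_filter.2 ⟨mem_univ i, (hpos.trans_le (hf (mem_Iic.1 hi))).ne'⟩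
  have := card_le_card hsub
  rw [Fin.card_Iic] at this
  omega

theorem sum_filter_le_lt_eq_sum_sub {m k d : ℕ} {f : Fin m → ℝ}
    (hf : ∀ j : Fin m, d ≤ j → f j = 0) :
    ∑ j : Fin m with k ≤ j.val ∧ j.val < d, f j = ∑ j, f j - ∑ j : Fin m with j.val < k, f j := by
  rw [eq_sub_iff_add_eq, sum_filter, sum_filter, ← sum_add_distrib]
  refine sum_congr rfl fun j _ => ?_
  by_cases hjk : (j : ℕ) < k
  · simp [hjk, not_le.2 hjk]
  · by_cases hjd : (j : ℕ) < d
    · simp [hjk, hjd, le_of_not_gt hjk]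
    · simp [hjk, hjd, hf j (le_of_not_gt hjd)]

section InnerProductSpace

variable {E F : Type*} [NormedAddCommGroup E] [InnerProductSpace ℝ E]
  [NormedAddCommGroup F] [InnerProductSpace ℝ F]

theorem Submodule.infDist_sq_eq_norm_sq_sub_norm_sq_starProjection (V : Submodule ℝ F)
    [V.HasOrthogonalProjection] (x : F) :
    Metric.infDist x V ^ 2 = ‖x‖ ^ 2 - ‖V.starProjection x‖ ^ 2 := by
  have hdist : Metric.infDist x V = ‖x - V.starProjection x‖ := by
    rw [Metric.infDist_eq_iInf, starProjection_minimal]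
    simp_rw [dist_eq_norm]
    rfl
  rw [hdist, ← V.starProjection_orthogonal_val, V.norm_sq_eq_add_norm_sq_starProjection x]
  ring

theorem Orthonormal.sum_norm_sq_starProjection_le_finrank {ι : Type*} [Fintype ι] {u : ι → F}
    (hu : Orthonormal ℝ u) (V : Submodule ℝ F) [FiniteDimensional ℝ V] :
    ∑ j, ‖V.starProjection (u j)‖ ^ 2 ≤ finrank ℝ V := by
  let w := stdOrthonormalBasis ℝ V
  have hparseval : ∀ x, ‖V.starProjection x‖ ^ 2 = ∑ t, ⟪(w t : F), x⟫ ^ 2 := fun x => by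
    rw [V.starProjection_apply, Submodule.norm_coe, ← w.sum_sq_inner_right]
    simp
  calc ∑ j, ‖V.starProjection (u j)‖ ^ 2 = ∑ t, ∑ j, ‖⟪u j, (w t : F)⟫‖ ^ 2 := by
        simp_rw [hparseval, Real.norm_eq_abs, sq_abs, real_inner_comm]
        exact sum_comm
    _ ≤ ∑ _t, (1 : ℝ) := sum_le_sum fun t _ => by
        simpa [Submodule.norm_coe, w.orthonormal.1 t] using
          hu.sum_inner_products_le (w t : F) (s := univ)
    _ = finrank ℝ V := by simp

theorem LinearMap.sum_norm_sq_apply_eq_trace [FiniteDimensional ℝ E] [FiniteDimensional ℝ F]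
    {ι : Type*} [Fintype ι] (S : E →ₗ[ℝ] F) (b : OrthonormalBasis ι ℝ E) :
    ∑ i, ‖S (b i)‖ ^ 2 = trace ℝ E (adjoint S ∘ₗ S) := by
  rw [trace_eq_sum_inner _ b]
  refine sum_congr rfl fun i _ => ?_
  rw [comp_apply, adjoint_inner_right, real_inner_self_eq_norm_sq]

end InnerProductSpace

namespace LinearMap

open Submodule

variable {E F : Type*} [NormedAddCommGroup E] [InnerProductSpace ℝ E] [FiniteDimensional ℝ E]
  [NormedAddCommGroup F] [InnerProductSpace ℝ F] [FiniteDimensional ℝ F]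
  {ι : Type*} [Fintype ι]

def IsRightSingularBasis (T : E →ₗ[ℝ] F) (v : OrthonormalBasis ι ℝ E) (μ : ι → ℝ) : Prop :=
  ∀ j, adjoint T (T (v j)) = μ j • v j

namespace IsRightSingularBasis

variable {T : E →ₗ[ℝ] F} {v : OrthonormalBasis ι ℝ E} {μ : ι → ℝ}

theorem inner_apply (hv : T.IsRightSingularBasis v μ) (i j : ι) :
    ⟪T (v i), T (v j)⟫ = μ j * ⟪v i, v j⟫ := by
  rw [← adjoint_inner_right, hv, real_inner_smul_right]

theorem inner_apply_of_ne (hv : T.IsRightSingularBasis v μ) {i j : ι} (hij : i ≠ j) :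
    ⟪T (v i), T (v j)⟫ = 0 := by
  rw [hv.inner_apply, v.orthonormal.2 hij, mul_zero]

theorem norm_sq_apply (hv : T.IsRightSingularBasis v μ) (j : ι) : ‖T (v j)‖ ^ 2 = μ j := by
  rw [← real_inner_self_eq_norm_sq, hv.inner_apply, real_inner_self_eq_norm_sq,
    v.orthonormal.1 j, one_pow, mul_one]

theorem nonneg (hv : T.IsRightSingularBasis v μ) (j : ι) : 0 ≤ μ j :=
  hv.norm_sq_apply j ▸ sq_nonneg _

theorem norm_apply (hv : T.IsRightSingularBasis v μ) (j : ι) : ‖T (v j)‖ = √(μ j) := by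
  rw [← hv.norm_sq_apply, Real.sqrt_sq (norm_nonneg _)]

theorem apply_eq_sqrt_smul (hv : T.IsRightSingularBasis v μ) (j : ι) :
    T (v j) = √(μ j) • (√(μ j))⁻¹ • T (v j) := by
  rw [← hv.norm_apply]
  by_cases h : T (v j) = 0
  · simp [h]
  · rw [smul_smul, mul_inv_cancel₀ (norm_ne_zero_iff.2 h), one_smul]

theorem orthonormal_normalize (hv : T.IsRightSingularBasis v μ) :
    Orthonormal ℝ fun j : {j // μ j ≠ 0} => (√(μ j))⁻¹ • T (v j) := by
  refine ⟨fun j => ?_, fun i j hij => ?_⟩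
  · rw [norm_smul, hv.norm_apply, norm_inv, Real.norm_of_nonneg (Real.sqrt_nonneg _),
      inv_mul_cancel₀ (Real.sqrt_ne_zero'.2 ((hv.nonneg j).lt_of_ne' j.2))]
  · dsimp only
    rw [real_inner_smul_left, real_inner_smul_right,
      hv.inner_apply_of_ne (Subtype.coe_ne_coe.2 hij), mul_zero, mul_zero]

theorem sum_infDist_sq {κ : Type*} [Fintype κ] (hv : T.IsRightSingularBasis v μ)
    (b : OrthonormalBasis κ ℝ E) (V : Submodule ℝ F) :
    ∑ i, Metric.infDist (T (b i)) V ^ 2 = ∑ j, μ j - ∑ j, ‖V.starProjection (T (v j))‖ ^ 2 := by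
  have hbasis (S : E →ₗ[ℝ] F) : ∑ i, ‖S (b i)‖ ^ 2 = ∑ j, ‖S (v j)‖ ^ 2 := by
    rw [sum_norm_sq_apply_eq_trace, sum_norm_sq_apply_eq_trace]
  simp_rw [V.infDist_sq_eq_norm_sq_sub_norm_sq_starProjection, sum_sub_distrib, ← hv.norm_sq_apply]
  exact congr_arg₂ _ (hbasis T) (hbasis (V.starProjection.toLinearMap ∘ₗ T))

theorem sum_norm_sq_starProjection_span (hv : T.IsRightSingularBasis v μ) (s : Finset ι) :
    ∑ j, ‖(span ℝ (T ∘ v '' s)).starProjection (T (v j))‖ ^ 2 = ∑ j ∈ s, μ j := by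
  rw [← sum_subset (subset_univ s) fun j _ hj => ?_]
  · refine sum_congr rfl fun j hj => ?_
    have hmem : T (v j) ∈ span ℝ (T ∘ v '' s) := subset_span (Set.mem_image_of_mem (T ∘ v) hj)
    rw [starProjection_eq_self_iff.2 hmem, hv.norm_sq_apply]
  · have hperp : T (v j) ∈ (span ℝ (T ∘ v '' s))ᗮ := by
      refine (isOrtho_span (s := {T (v j)})).2 ?_ (mem_span_singleton_self _)
      rintro _ rfl _ hx
      obtain ⟨i, hi, rfl⟩ := hx
      exact hv.inner_apply_of_ne fun hji => hj (hji ▸ hi)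
    rw [(starProjection_apply_eq_zero_iff _).2 hperp, norm_zero, zero_pow two_ne_zero]

theorem sum_norm_sq_starProjection_le {m k : ℕ} {v : OrthonormalBasis (Fin m) ℝ E}
    {μ : Fin m → ℝ} (hv : T.IsRightSingularBasis v μ) (hμ : Antitone μ) (V : Submodule ℝ F)
    (hV : finrank ℝ V ≤ k) :
    ∑ j, ‖V.starProjection (T (v j))‖ ^ 2 ≤ ∑ j : Fin m with j.val < k, μ j := by
  set t : Fin m → ℝ := fun j => ‖V.starProjection ((√(μ j))⁻¹ • T (v j))‖ ^ 2
  have ht1 (j : Fin m) : t j ≤ 1 := by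
    have hnorm : ‖(√(μ j))⁻¹ • T (v j)‖ ≤ 1 := by
      rw [norm_smul, hv.norm_apply, norm_inv, Real.norm_of_nonneg (Real.sqrt_nonneg _)]
      exact inv_mul_le_one
    exact pow_le_one₀ (norm_nonneg _) ((V.norm_orthogonalProjectionOnto_apply_le _).trans hnorm)
  have ht : ∑ j, t j ≤ k := by
    classical
    -- `t j = 0` when `μ j = 0`, because then `(√(μ j))⁻¹ = 0`
    calc ∑ j, t j = ∑ j with μ j ≠ 0, t j :=
          (sum_filter_of_ne fun j _ htj => by contrapose! htj; simp [t, htj]).symm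
      _ = ∑ j : {j // μ j ≠ 0}, t j := sum_subtype _ (by simp) _
      _ ≤ finrank ℝ V := hv.orthonormal_normalize.sum_norm_sq_starProjection_le_finrank V
      _ ≤ k := by exact_mod_cast hV
  calc ∑ j, ‖V.starProjection (T (v j))‖ ^ 2 = ∑ j, μ j * t j := by
        refine sum_congr rfl fun j _ => ?_
        rw [hv.apply_eq_sqrt_smul j, map_smul, norm_smul, mul_pow, Real.norm_eq_abs, sq_abs,
          Real.sq_sqrt (hv.nonneg j)]
    _ ≤ _ := hμ.sum_mul_le_sum_lt hv.nonneg (fun _ => sq_nonneg _) ht1 ht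

theorem isLeast_sum_infDist_sq {m : ℕ} {v : OrthonormalBasis (Fin m) ℝ E} {μ : Fin m → ℝ}
    (hv : T.IsRightSingularBasis v μ) (hμ : Antitone μ) {κ : Type*} [Fintype κ]
    (b : OrthonormalBasis κ ℝ E) (k : ℕ) :
    IsLeast {e : ℝ | ∃ V : Submodule ℝ F, finrank ℝ V ≤ k ∧
        e = ∑ i, Metric.infDist (T (b i)) V ^ 2}
      (∑ j, μ j - ∑ j : Fin m with j.val < k, μ j) := by
  refine ⟨⟨span ℝ (T ∘ v '' ({j | j.val < k} : Finset (Fin m))), ?_, ?_⟩, ?_⟩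
  · classical
    rw [← coe_image]
    refine (finrank_span_finset_le_card _).trans (card_image_le.trans ?_)
    rw [Fin.card_filter_val_lt]
    exact min_le_right _ _
  · rw [hv.sum_infDist_sq b, hv.sum_norm_sq_starProjection_span]
  · rintro _ ⟨V, hV, rfl⟩
    rw [hv.sum_infDist_sq b]
    linarith [hv.sum_norm_sq_starProjection_le hμ V hV]

end IsRightSingularBasis

end LinearMap

section Matrix

variable {m : ℕ} {A : Matrix (Fin m) (Fin m) ℝ}

theorem eigDesc_antitone (hA : A.IsHermitian) : Antitone (eigDesc hA) := fun _ _ hij =>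
  neg_le_neg_iff.1 (Tuple.monotone_sort (fun j => -hA.eigenvalues j) hij)

theorem exists_orthonormalBasis_toEuclideanLin_eq_eigDesc_smul (hA : A.IsHermitian) :
    ∃ v : OrthonormalBasis (Fin m) ℝ (EuclideanSpace ℝ (Fin m)),
      ∀ j, A.toEuclideanLin (v j) = eigDesc hA j • v j :=
  ⟨hA.eigenvectorBasis.reindex (Tuple.sort fun j => -hA.eigenvalues j).symm, fun j => by
    ext1
    simp [eigDesc, hA.mulVec_eigenvectorBasis]⟩

theorem card_eigDesc_ne_zero (hA : A.IsHermitian) : #{j | eigDesc hA j ≠ 0} = A.rank := by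
  rw [hA.rank_eq_card_non_zero_eigs, ← Fintype.card_subtype]
  exact Fintype.card_congr (Equiv.subtypeEquiv (Tuple.sort _) fun j => Iff.rfl)

end Matrix

theorem eckart_young_general {N m k d : ℕ} (M : Matrix (Fin N) (Fin m) ℝ)
    (hH : (Mᵀ * M).IsHermitian) (hd : M.rank = d) :
    IsLeast {e : ℝ | ∃ V : Submodule ℝ (EuclideanSpace ℝ (Fin N)),
        Module.finrank ℝ V ≤ k ∧
        e = ∑ i : Fin m, Metric.infDist (toE fun t => M t i) (V : Set (EuclideanSpace ℝ (Fin N))) ^ 2}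
      (∑ j ∈ Finset.univ.filter (fun j : Fin m => k ≤ (j : ℕ) ∧ (j : ℕ) < d),
        eigDesc hH j) := by
  obtain ⟨v, hv⟩ := exists_orthonormalBasis_toEuclideanLin_eq_eigDesc_smul hH
  have hsing : M.toEuclideanLin.IsRightSingularBasis v (eigDesc hH) := fun j => by
    rw [← toEuclideanLin_conjTranspose_eq_adjoint, conjTranspose_eq_transpose_of_trivial, ← hv]
    ext1
    simp [mulVec_mulVec]
  have hcol (i : Fin m) :
      M.toEuclideanLin (EuclideanSpace.basisFun (Fin m) ℝ i) = toE fun t => M t i := by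
    ext
    simp [toE, mulVec_single]
  have hzero (j : Fin m) (hj : d ≤ j) : eigDesc hH j = 0 :=
    (eigDesc_antitone hH).eq_zero_of_card_ne_zero_le hsing.nonneg
      (by rwa [card_eigDesc_ne_zero, rank_transpose_mul_self, hd])
  rw [sum_filter_le_lt_eq_sum_sub hzero]
  simpa only [hcol] using
    hsing.isLeast_sum_infDist_sq (eigDesc_antitone hH) (EuclideanSpace.basisFun (Fin m) ℝ) k

/-- Eckart–Young (error form): the minimum over subspaces `V` with `dim V ≤ k` of
`Σ_i dist²(f_i, V)` (the `f_i` being the columns of `M`) is attained and equals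
`Σ_{j=k+1}^d λ_j(MᵀM)`, where `d = rank M` and eigenvalues are in decreasing order. -/
theorem eckart_young {N m k d : ℕ} (M : Matrix (Fin N) (Fin m) ℝ)
    (hH : (Mᵀ * M).IsHermitian) (hd : M.rank = d) (hkd : k ≤ d) :
    IsLeast {e : ℝ | ∃ V : Submodule ℝ (EuclideanSpace ℝ (Fin N)),
        Module.finrank ℝ V ≤ k ∧
        e = ∑ i : Fin m, Metric.infDist (toE fun t => M t i) (V : Set (EuclideanSpace ℝ (Fin N))) ^ 2}
      (∑ j ∈ Finset.univ.filter (fun j : Fin m => k ≤ (j : ℕ) ∧ (j : ℕ) < d),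
        eigDesc hH j) :=
  eckart_young_general M hH hd
end

section
/- Let F = {f_1,...,f_m} be a finite subset of a (possibly infinite-dimensional) real Hilbert space H, and let l, k be positive integers. Then there exists a bundle B₀ = {V_1⁰,...,V_l⁰} of closed subspaces of H with dim(V_i⁰) ≤ k attaining the infimum e₀(F) = inf{e(F,B) : B a bundle of l subspaces of dimension ≤ k}, and moreover each V_i⁰ can be taken inside span{f_1,...,f_m}. -/
/-!
Orthogonal projection onto `E = span F` fixes the data and is `1`-Lipschitz, so replacing each
subspace of a bundle by its projection into `E` keeps the dimension bound and does not increase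
the error. In the finite-dimensional `E`, every subspace of dimension at most `k` lies in the span
of an orthonormal frame of `r = min k (dim E)` vectors; the distance to such a span is
`‖f - ∑ ⟪eₜ, f⟫ eₜ‖`, continuous in the frame, and orthonormal frames form a compact set. A family
of frames minimising the error therefore exists and spans an optimal bundle.
-/

open Metric Module Submodule Set
open scoped InnerProductSpace

theorem LipschitzWith.infDist_image_le {X Y : Type*} [PseudoMetricSpace X]
    [PseudoMetricSpace Y] {φ : X → Y} (hφ : LipschitzWith 1 φ) (x : X) (s : Set X) :
    infDist (φ x) (φ '' s) ≤ infDist x s := by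
  rcases s.eq_empty_or_nonempty with rfl | hs
  · simp
  refine (le_infDist hs).2 fun y hy => ?_
  calc infDist (φ x) (φ '' s) ≤ dist (φ x) (φ y) :=
        infDist_le_dist_of_mem (mem_image_of_mem φ hy)
    _ ≤ dist x y := hφ.dist_le_mul_of_le le_rfl |>.trans_eq (one_mul _)

theorem Continuous.iInf_apply_of_finite {X α κ : Type*} [TopologicalSpace X]
    [ConditionallyCompleteLinearOrder α] [TopologicalSpace α] [ContinuousInf α] [Finite κ]
    {f : κ → X → α} (hf : ∀ j, Continuous (f j)) : Continuous fun x => ⨅ j, f j x := by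
  have := Fintype.ofFinite κ
  rcases isEmpty_or_nonempty κ with hκ | hκ
  · simp only [iInf, range_eq_empty]
    exact continuous_const
  simpa only [Finset.inf'_univ_eq_ciInf] using
    Continuous.finset_inf'_apply Finset.univ_nonempty fun j _ => hf j

theorem Submodule.exists_le_finrank_eq {K V : Type*} [DivisionRing K] [AddCommGroup V]
    [Module K V] [Module.Finite K V] (p : Submodule K V) {r : ℕ} (hpr : finrank K p ≤ r)
    (hr : r ≤ finrank K V) : ∃ q, p ≤ q ∧ finrank K q = r := by
  induction r, hpr using Nat.le_induction with
  | base => exact ⟨p, le_rfl, rfl⟩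
  | succ r _ ih =>
    obtain ⟨q, hpq, hq⟩ := ih (by omega)
    obtain ⟨v, -, hv⟩ : ∃ v ∈ (⊤ : Submodule K V), v ∉ q := SetLike.exists_of_lt <|
      lt_top_iff_ne_top.2 fun h => by rw [h, finrank_top] at hq; omega
    exact ⟨q ⊔ span K {v}, hpq.trans le_sup_left, by rw [finrank_sup_span_singleton hv, hq]⟩

section

variable {𝕜 E : Type*} [RCLike 𝕜] [NormedAddCommGroup E] [InnerProductSpace 𝕜 E]

theorem Submodule.infDist_eq_norm_sub_starProjection (K : Submodule 𝕜 E)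
    [K.HasOrthogonalProjection] (x : E) : infDist x K = ‖x - K.starProjection x‖ := by
  rw [starProjection_minimal, infDist_eq_iInf]
  simp only [dist_eq_norm]
  rfl

theorem Orthonormal.infDist_span_range {ι : Type*} [Fintype ι] {e : ι → E}
    (he : Orthonormal 𝕜 e) (x : E) :
    infDist x (span 𝕜 (range e)) = ‖x - ∑ t, ⟪e t, x⟫_𝕜 • e t‖ := by
  have : FiniteDimensional 𝕜 (span 𝕜 (range e)) :=
    FiniteDimensional.span_of_finite 𝕜 (finite_range e)
  let b : OrthonormalBasis ι 𝕜 (span 𝕜 (range e)) :=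
    (Module.Basis.span he.linearIndependent).toOrthonormalBasis (by
      rw [show ⇑(Module.Basis.span he.linearIndependent) = _ from
        funext (Module.Basis.span_apply _)]
      exact orthonormal_span he)
  have hb : ∀ t, (b t : E) = e t := fun t => by simp [b, Module.Basis.span_apply]
  rw [infDist_eq_norm_sub_starProjection, starProjection_apply,
    b.orthogonalProjectionOnto_apply_eq_sum]
  simp [hb]

theorem isCompact_setOf_orthonormal [FiniteDimensional 𝕜 E] {ι : Type*} [Fintype ι] :
    IsCompact {v : ι → E | Orthonormal 𝕜 v} := by
  classical
  have := FiniteDimensional.proper_rclike 𝕜 E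
  have hclosed : IsClosed {v : ι → E | Orthonormal 𝕜 v} := by
    simp only [orthonormal_iff_ite, ofPred_forall]
    exact isClosed_iInter fun i => isClosed_iInter fun j =>
      isClosed_eq (by fun_prop) continuous_const
  refine Metric.isCompact_of_isClosed_isBounded hclosed
    ((isBounded_closedBall (x := 0) (r := 1)).subset fun v hv => ?_)
  rw [mem_closedBall_zero_iff]
  exact (pi_norm_le_iff_of_nonneg zero_le_one).2 fun i => (hv.1 i).le

theorem exists_orthonormal_le_span_range [FiniteDimensional 𝕜 E] {r : ℕ}
    (hr : r ≤ finrank 𝕜 E) (U : Submodule 𝕜 E) (hU : finrank 𝕜 U ≤ r) :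
    ∃ e : Fin r → E, Orthonormal 𝕜 e ∧ U ≤ span 𝕜 (range e) := by
  obtain ⟨U', hUU', hU'⟩ := U.exists_le_finrank_eq hU hr
  let b := (stdOrthonormalBasis 𝕜 U').reindex (finCongr hU')
  refine ⟨fun t => b t, b.orthonormal.comp_linearIsometry U'.subtypeₗᵢ, hUU'.trans_eq ?_⟩
  calc U' = (⊤ : Submodule 𝕜 U').map U'.subtype := (map_subtype_top U').symm
    _ = (span 𝕜 (range b)).map U'.subtype := by rw [← b.coe_toBasis, b.toBasis.span_eq]
    _ = span 𝕜 (range fun t => (b t : E)) := by rw [map_span, ← range_comp]; rfl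

end

section Bundle

variable {E F : Type*} [NormedAddCommGroup E] [InnerProductSpace ℝ E] [NormedAddCommGroup F]
  [InnerProductSpace ℝ F] {ι κ : Type*} [Fintype ι]

/-- The approximation error `e(F, B)` of the data `x` by the bundle `V`. -/
noncomputable def bundleError (x : ι → E) (V : κ → Submodule ℝ E) : ℝ :=
  ∑ i, ⨅ j, infDist (x i) (V j : Set E) ^ 2

theorem bundleError_le_bundleError {x : ι → E} {V : κ → Submodule ℝ E} {y : ι → F}
    {W : κ → Submodule ℝ F}
    (h : ∀ i j, infDist (x i) (V j : Set E) ≤ infDist (y i) (W j : Set F)) :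
    bundleError x V ≤ bundleError y W :=
  Finset.sum_le_sum fun i _ => ciInf_mono ⟨0, forall_mem_range.2 fun _ => sq_nonneg _⟩ fun j =>
    pow_le_pow_left₀ infDist_nonneg (h i j) 2

theorem bundleError_anti (x : ι → E) {V W : κ → Submodule ℝ E} (h : ∀ j, V j ≤ W j) :
    bundleError x W ≤ bundleError x V :=
  bundleError_le_bundleError fun _ j => infDist_le_infDist_of_subset (h j) ⟨0, zero_mem _⟩

theorem bundleError_map_linearIsometry (L : E →ₗᵢ[ℝ] F) (x : ι → E) (V : κ → Submodule ℝ E) :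
    bundleError (fun i => L (x i)) (fun j => (V j).map L.toLinearMap) = bundleError x V := by
  simp only [bundleError, map_coe, LinearIsometry.coe_toLinearMap, infDist_image L.isometry]

theorem bundleError_map_orthogonalProjectionOnto_le (K : Submodule ℝ E)
    [K.HasOrthogonalProjection] (x : ι → K) (W : κ → Submodule ℝ E) :
    bundleError x (fun j => (W j).map (K.orthogonalProjectionOnto : E →ₗ[ℝ] K)) ≤
      bundleError (fun i => (x i : E)) W :=
  bundleError_le_bundleError fun i j => by
    simpa [map_coe] using
      K.lipschitzWith_orthogonalProjectionOnto.infDist_image_le (x i : E) (W j : Set E)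

theorem exists_bundle_forall_bundleError_le [FiniteDimensional ℝ E] [Fintype κ] (x : ι → E)
    (k : ℕ) : ∃ V : κ → Submodule ℝ E, (∀ j, finrank ℝ (V j) ≤ k) ∧
      ∀ W : κ → Submodule ℝ E, (∀ j, finrank ℝ (W j) ≤ k) → bundleError x V ≤ bundleError x W := by
  set r := min k (finrank ℝ E)
  have hframe (U : Submodule ℝ E) (hU : finrank ℝ U ≤ k) :
      ∃ e : Fin r → E, Orthonormal ℝ e ∧ U ≤ span ℝ (range e) :=
    exists_orthonormal_le_span_range (min_le_right _ _) U (le_min hU (Submodule.finrank_le U))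
  let X : Set (κ → Fin r → E) := univ.pi fun _ => {v | Orthonormal ℝ v}
  have hXne : X.Nonempty := by
    obtain ⟨e, he, -⟩ := hframe ⊥ (by simp)
    exact ⟨fun _ => e, fun _ _ => he⟩
  have hcont : ContinuousOn
      (fun e : κ → Fin r → E => bundleError x fun j => span ℝ (range (e j))) X := by
    refine ContinuousOn.congr (f := fun e => ∑ i, ⨅ j, ‖x i - ∑ t, ⟪e j t, x i⟫_ℝ • e j t‖ ^ 2)
      ?_ fun e he => ?_
    · exact (continuous_finsetSum _ fun i _ =>
        Continuous.iInf_apply_of_finite fun j => by fun_prop).continuousOn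
    · simp only [bundleError, fun j => (he j trivial).infDist_span_range]
  obtain ⟨e₀, -, hmin⟩ :=
    (isCompact_univ_pi fun _ => isCompact_setOf_orthonormal).exists_isMinOn hXne hcont
  refine ⟨fun j => span ℝ (range (e₀ j)), fun j => (finrank_range_le_card _).trans ?_,
    fun W hW => ?_⟩
  · simp [r]
  choose e he hWe using fun j => hframe (W j) (hW j)
  exact (hmin fun j _ => he j).trans (bundleError_anti x hWe)

end Bundle

theorem exists_optimal_bundle_general {H : Type*} [NormedAddCommGroup H]
    [InnerProductSpace ℝ H]
    {m l k : ℕ} (F : Fin m → H) :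
    ∃ V : Fin l → Submodule ℝ H,
      (∀ i, FiniteDimensional ℝ (V i)) ∧
      (∀ i, IsClosed (V i : Set H)) ∧
      (∀ i, Module.finrank ℝ (V i) ≤ k) ∧
      (∀ i, V i ≤ Submodule.span ℝ (Set.range F)) ∧
      (∑ i, ⨅ j, Metric.infDist (F i) (V j : Set H) ^ 2) =
        sInf {e : ℝ | ∃ W : Fin l → Submodule ℝ H,
          (∀ i, FiniteDimensional ℝ (W i)) ∧
          (∀ i, Module.finrank ℝ (W i) ≤ k) ∧
          e = ∑ i, ⨅ j, Metric.infDist (F i) (W j : Set H) ^ 2} := by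
  set E := span ℝ (range F)
  have : FiniteDimensional ℝ E := FiniteDimensional.span_of_finite ℝ (finite_range F)
  let x : Fin m → E := fun i => ⟨F i, subset_span (mem_range_self i)⟩
  obtain ⟨V, hVk, hVmin⟩ := exists_bundle_forall_bundleError_le (κ := Fin l) x k
  refine ⟨fun j => (V j).map E.subtype, fun j => inferInstance,
    fun j => closed_of_finiteDimensional _, fun j => (finrank_map_le _ _).trans (hVk j),
    fun j => map_subtype_le _ _, ?_⟩
  refine Eq.symm (IsLeast.csInf_eq ⟨⟨_, fun j => inferInstance,
    fun j => (finrank_map_le _ _).trans (hVk j), rfl⟩, ?_⟩)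
  rintro _ ⟨W, hWfin, hWk, rfl⟩
  calc bundleError F (fun j => (V j).map E.subtype)
      = bundleError x V := bundleError_map_linearIsometry E.subtypeₗᵢ x V
    _ ≤ bundleError x fun j => (W j).map (E.orthogonalProjectionOnto : H →ₗ[ℝ] E) :=
      hVmin _ fun j => (finrank_map_le _ _).trans (hWk j)
    _ ≤ bundleError F W := bundleError_map_orthogonalProjectionOnto_le E x W

/-- Existence of an optimal bundle (Theorem 2.2 / \cite{ACM08}): for a finite data set
`F` in a real Hilbert space `H` and positive integers `l, k`, there is a bundle of `l`
closed subspaces of dimension at most `k`, each contained in the span of the data,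
attaining the infimum `e₀(F)` of `e(F,B) = Σ_i min_j dist²(f_i, V_j)` over all bundles. -/
theorem exists_optimal_bundle {H : Type*} [NormedAddCommGroup H]
    [InnerProductSpace ℝ H] [CompleteSpace H]
    {m l k : ℕ} (hl : 0 < l) (hk : 0 < k) (F : Fin m → H) :
    ∃ V : Fin l → Submodule ℝ H,
      (∀ i, FiniteDimensional ℝ (V i)) ∧
      (∀ i, IsClosed (V i : Set H)) ∧
      (∀ i, Module.finrank ℝ (V i) ≤ k) ∧
      (∀ i, V i ≤ Submodule.span ℝ (Set.range F)) ∧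
      (∑ i, ⨅ j, Metric.infDist (F i) (V j : Set H) ^ 2) =
        sInf {e : ℝ | ∃ W : Fin l → Submodule ℝ H,
          (∀ i, FiniteDimensional ℝ (W i)) ∧
          (∀ i, Module.finrank ℝ (W i) ≤ k) ∧
          e = ∑ i, ⨅ j, Metric.infDist (F i) (W j : Set H) ^ 2} :=
  exists_optimal_bundle_general F
end
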